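/- arXiv:2412.04196 — 2 statements merged into one kernel-verified Lean document; each statement's English description precedes it below -/
import Mathlib

section
/- Let m ≥ 1 and let D_m denote the dihedral group of order 2m, with its rotation subgroup of index 2; call the elements outside the rotation subgroup reflections. Let π : E → D_m be a surjective group homomorphism whose kernel is contained in the center of E and is isomorphic, as an abstract group, to ℚ/ℤ. Suppose there is a reflection r₀ ∈ D_m such that for every reflection r conjugate to r₀ and every h ∈ D_m commuting with r there exist lifts r̃, h̃ ∈ E of r, h with r̃·h̃ = h̃·r̃. Then π admits a group-homomorphism section s : D_m → E with π ∘ s = id. -/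
/-! The obstruction to splitting is the central defect `z = a * (b * a * b⁻¹)` of a lift `a` of the
rotation `r 1` (with `a ^ m = 1`) and a lift `b` of a reflection (with `b ^ 2 = 1`), both of which
exist because the kernel is divisible. A central `u` with `u ^ 2 * z = 1` and `u ^ m = 1` turns
`(a * u, b)` into a pair satisfying the dihedral relations, hence into a section. For odd `m` such
a `u` is a power of `z`, since `z ^ m = 1`. For even `m = 2 * k`, commuting lifts of `b` and of the
half-turn `r k` force `z ^ k = 1`, and then any square root of `z⁻¹` in the kernel works. -/

instance Rat.divisibleByNat : DivisibleBy ℚ ℕ := AddGroup.divisibleByNatOfDivisibleByInt ℚ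

noncomputable instance Multiplicative.rootableByNat {A : Type*} [AddMonoid A]
    [DivisibleBy A ℕ] : RootableBy (Multiplicative A) ℕ where
  root a n := .ofAdd (DivisibleBy.div a.toAdd n)
  root_zero a := congrArg Multiplicative.ofAdd (DivisibleBy.div_zero a.toAdd)
  root_cancel a hn := congrArg Multiplicative.ofAdd (DivisibleBy.div_cancel a.toAdd hn)

section Group

variable {G : Type*} [Group G]

lemma zpow_mul_eq_mul_zpow_neg {a b : G} (hba : b * a * b⁻¹ = a⁻¹) (k : ℤ) :
    a ^ k * b = b * a ^ (-k) := by
  rw [← neg_neg k, ← inv_zpow', ← hba, conj_zpow, inv_mul_cancel_right, neg_neg]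

lemma mul_conj_pow {a b : G} (h : Commute a (b * a * b⁻¹)) (k : ℕ) :
    (a * (b * a * b⁻¹)) ^ k = a ^ k * (b * a ^ k * b⁻¹) := by
  rw [h.mul_pow, conj_pow]

def ZMod.liftPow {n : ℕ} (a : G) (ha : a ^ n = 1) : ZMod n →+ Additive G :=
  ZMod.lift n ⟨zmultiplesHom _ (Additive.ofMul a), by simp [← ofMul_pow, ha]⟩

@[simp]
lemma ZMod.toMul_liftPow_intCast {n : ℕ} {a : G} (ha : a ^ n = 1) (k : ℤ) :
    (ZMod.liftPow a ha k).toMul = a ^ k := by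
  simp [ZMod.liftPow]

end Group

namespace DihedralGroup

variable {n : ℕ} {G : Type*} [Group G]

def lift (a b : G) (ha : a ^ n = 1) (hb : b ^ 2 = 1) (hba : b * a * b⁻¹ = a⁻¹) :
    DihedralGroup n →* G where
  toFun
    | r i => (ZMod.liftPow a ha i).toMul
    | sr i => b * (ZMod.liftPow a ha i).toMul
  map_one' := by simp [one_def, -r_zero]
  map_mul' := by
    rintro (i | i) (j | j) <;>
      obtain ⟨k, rfl⟩ := ZMod.intCast_surjective i <;>
      obtain ⟨l, rfl⟩ := ZMod.intCast_surjective j <;>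
      simp only [r_mul_r, r_mul_sr, sr_mul_r, sr_mul_sr, ← Int.cast_add, ← Int.cast_sub,
        ZMod.toMul_liftPow_intCast]
    · rw [zpow_add]
    · rw [← mul_assoc, zpow_mul_eq_mul_zpow_neg hba, mul_assoc, ← zpow_add, neg_add_eq_sub]
    · rw [zpow_add, mul_assoc]
    · rw [mul_assoc, ← mul_assoc _ b, zpow_mul_eq_mul_zpow_neg hba, ← mul_assoc, ← mul_assoc,
        ← pow_two, hb, one_mul, ← zpow_add, neg_add_eq_sub]

@[simp]
lemma lift_r {a b : G} {ha : a ^ n = 1} {hb : b ^ 2 = 1} {hba : b * a * b⁻¹ = a⁻¹} (k : ℤ) :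
    lift a b ha hb hba (r k) = a ^ k :=
  ZMod.toMul_liftPow_intCast ha k

@[simp]
lemma lift_sr {a b : G} {ha : a ^ n = 1} {hb : b ^ 2 = 1} {hba : b * a * b⁻¹ = a⁻¹} (k : ℤ) :
    lift a b ha hb hba (sr k) = b * a ^ k :=
  congrArg (b * ·) (ZMod.toMul_liftPow_intCast ha k)

lemma exists_comp_eq_id_of_lifts {E : Type*} [Group E] (π : E →* DihedralGroup n) {a b : E}
    {c : ZMod n} (ha : a ^ n = 1) (hb : b ^ 2 = 1) (hba : b * a * b⁻¹ = a⁻¹)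
    (hπa : π a = r 1) (hπb : π b = sr c) :
    ∃ s : DihedralGroup n →* E, π.comp s = MonoidHom.id _ := by
  obtain ⟨k, rfl⟩ := ZMod.intCast_surjective c
  set f := lift a b ha hb hba
  have hfr : f (r 1) = a := by simpa using lift_r (hb := hb) (hba := hba) 1
  set B := f (sr (-k : ℤ))
  have hB : B ^ 2 = 1 := by rw [← map_pow, pow_two, sr_mul_self, map_one]
  have hBa : B * a * B⁻¹ = a⁻¹ := by
    rw [← hfr, ← map_inv, ← map_mul, ← map_mul, ← map_inv]
    simp
  have hπB : π B = sr 0 := by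
    simp [B, f, hπa, hπb]
  refine ⟨lift a B ha hB hBa, MonoidHom.ext fun x => ?_⟩
  rcases x with i | i <;> obtain ⟨l, rfl⟩ := ZMod.intCast_surjective i <;>
    simp [hπa, hπB]

lemma commute_sr_r {i : ZMod n} (hi : i + i = 0) (j : ZMod n) : Commute (sr j) (r i) := by
  rw [Commute, SemiconjBy, sr_mul_r, r_mul_sr, sub_eq_add_neg, neg_eq_of_add_eq_zero_right hi]

end DihedralGroup

section CentralExtension

variable {E : Type*} [Group E]

lemma Subgroup.commute_of_mem_center {z : E} (hz : z ∈ Subgroup.center E) (g : E) :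
    Commute g z :=
  Subgroup.mem_center_iff.mp hz g

lemma MonoidHom.commute_of_map_eq {G : Type*} [Group G] {π : E →* G}
    (hc : π.ker ≤ Subgroup.center E) {x y x' y' : E} (hx : π x' = π x) (hy : π y' = π y)
    (h : Commute x y) : Commute x' y' := by
  have hk := hc ((π.eq_iff).mp hx)
  have hl := hc ((π.eq_iff).mp hy)
  rw [← mul_inv_cancel_left x x', ← mul_inv_cancel_left y y']
  exact (h.mul_right (Subgroup.commute_of_mem_center hl x)).mul_left
    ((Subgroup.commute_of_mem_center hk y).symm.mul_right
      (Subgroup.commute_of_mem_center hl _))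

lemma MonoidHom.exists_map_eq_pow_eq_one {G : Type*} [Group G] {π : E →* G}
    (hπ : Function.Surjective π) (hc : π.ker ≤ Subgroup.center E) [RootableBy π.ker ℕ]
    {g : G} {n : ℕ} (hg : g ^ n = 1) : ∃ e, π e = g ∧ e ^ n = 1 := by
  obtain ⟨e, rfl⟩ := hπ g
  rcases eq_or_ne n 0 with rfl | hn
  · exact ⟨e, rfl, pow_zero e⟩
  set w : π.ker := RootableBy.root ⟨e ^ n, by simpa using hg⟩ n
  have hw : (w : E) ^ n = e ^ n := by
    rw [← Subgroup.coe_pow, RootableBy.root_cancel _ hn]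
  refine ⟨e * (w : E)⁻¹, by simp [MonoidHom.mem_ker.mp w.2], ?_⟩
  rw [(Subgroup.commute_of_mem_center (hc w.2) e).inv_right.mul_pow, inv_pow, hw,
    mul_inv_cancel]

lemma Subgroup.exists_sq_mul_eq_one_of_odd {K : Subgroup E} {z : E} (hz : z ∈ K) {m : ℕ}
    (hm : Odd m) (hzm : z ^ m = 1) : ∃ u ∈ K, u ^ 2 * z = 1 ∧ u ^ m = 1 := by
  obtain ⟨t, rfl⟩ := hm
  refine ⟨z⁻¹ ^ (t + 1), K.pow_mem (K.inv_mem hz) _, ?_, ?_⟩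
  · rw [← pow_mul, show (t + 1) * 2 = 2 * t + 1 + 1 by ring, pow_succ, inv_pow, hzm, inv_one,
      one_mul, inv_mul_cancel]
  · rw [← pow_mul, mul_comm, pow_mul, inv_pow, hzm, inv_one, one_pow]

lemma Subgroup.exists_sq_mul_eq_one_of_pow_eq_one {K : Subgroup E} [RootableBy K ℕ] {z : E}
    (hz : z ∈ K) {k : ℕ} (hzk : z ^ k = 1) : ∃ u ∈ K, u ^ 2 * z = 1 ∧ u ^ (2 * k) = 1 := by
  set w : K := RootableBy.root (⟨z, hz⟩⁻¹ : K) 2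
  have hw : (w : E) ^ 2 = z⁻¹ := by
    rw [← Subgroup.coe_pow, RootableBy.root_cancel _ two_ne_zero]; rfl
  refine ⟨w, w.2, by rw [hw, inv_mul_cancel], ?_⟩
  rw [pow_mul, hw, inv_pow, hzk, inv_one]

lemma Subgroup.exists_sq_mul_mul_conj_eq_one {K : Subgroup E} (hK : K ≤ Subgroup.center E)
    [RootableBy K ℕ] {a b : E} {m : ℕ} (ha : a ^ m = 1) (hz : a * (b * a * b⁻¹) ∈ K)
    (heven : ∀ k, m = 2 * k → Commute b (a ^ k)) :
    ∃ u ∈ K, u ^ 2 * (a * (b * a * b⁻¹)) = 1 ∧ u ^ m = 1 := by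
  have hcomm : Commute a (b * a * b⁻¹) := by
    rw [← inv_mul_cancel_left a (b * a * b⁻¹)]
    exact (Commute.refl a).inv_right.mul_right (Subgroup.commute_of_mem_center (hK hz) a)
  rcases Nat.even_or_odd' m with ⟨k, rfl | rfl⟩
  · refine K.exists_sq_mul_eq_one_of_pow_eq_one hz ?_
    rw [mul_conj_pow hcomm, (heven k rfl).eq, mul_inv_cancel_right, ← pow_add, ← two_mul, ha]
  · refine K.exists_sq_mul_eq_one_of_odd hz (odd_two_mul_add_one k) ?_
    rw [mul_conj_pow hcomm, ha, mul_one, mul_inv_cancel, one_mul]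

lemma conj_mul_eq_inv_of_sq_mul_mul_conj_eq_one {a b u : E} (hu : u ∈ Subgroup.center E)
    (h : u ^ 2 * (a * (b * a * b⁻¹)) = 1) : b * (a * u) * b⁻¹ = (a * u)⁻¹ := by
  have hconj : b * a * b⁻¹ = a⁻¹ * (u ^ 2)⁻¹ := by
    rw [← mul_inv_rev]
    exact eq_inv_of_mul_eq_one_right (by rw [mul_assoc, h])
  calc b * (a * u) * b⁻¹ = b * a * b⁻¹ * u := by
        rw [mul_assoc, mul_assoc, (Subgroup.commute_of_mem_center hu b⁻¹).symm.eq]; group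
    _ = a⁻¹ * u⁻¹ := by rw [hconj, pow_two]; group
    _ = (a * u)⁻¹ := by
        rw [mul_inv_rev, (Subgroup.commute_of_mem_center hu a⁻¹).inv_right.eq]

end CentralExtension

theorem central_extension_splits_of_commuting_lifts_dihedral_general
    (m : ℕ) (E : Type*) [Group E]
    (π : E →* DihedralGroup m) (hsurj : Function.Surjective π)
    (hcentral : π.ker ≤ Subgroup.center E)
    (hker : Nonempty (π.ker ≃* Multiplicative (ℚ ⧸ AddSubgroup.zmultiples (1 : ℚ))))
    (r₀ : ZMod m)
    (hcomm : ∀ r h : DihedralGroup m, (∃ i : ZMod m, r = DihedralGroup.sr i) →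
      IsConj (DihedralGroup.sr r₀) r → r * h = h * r →
      ∃ er eh : E, π er = r ∧ π eh = h ∧ er * eh = eh * er) :
    ∃ s : DihedralGroup m →* E, π.comp s = MonoidHom.id (DihedralGroup m) := by
  obtain ⟨e⟩ := hker
  have : RootableBy π.ker ℕ := e.symm.surjective.rootableBy _ (map_pow e.symm)
  obtain ⟨a, hπa, ha⟩ :=
    π.exists_map_eq_pow_eq_one hsurj hcentral (DihedralGroup.r_one_pow_n (n := m))
  obtain ⟨b, hπb, hb⟩ := π.exists_map_eq_pow_eq_one hsurj hcentral (n := 2)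
    (by rw [pow_two, DihedralGroup.sr_mul_self r₀])
  have hz : a * (b * a * b⁻¹) ∈ π.ker := by simp [hπa, hπb]
  have heven : ∀ k, m = 2 * k → Commute b (a ^ k) := by
    rintro k rfl
    have hk : (k : ZMod (2 * k)) + k = 0 := by
      rw [← Nat.cast_add, ← two_mul, ZMod.natCast_self]
    obtain ⟨er, eh, her, heh, hcomm'⟩ := hcomm _ _ ⟨r₀, rfl⟩ (.refl _)
      (DihedralGroup.commute_sr_r hk r₀)
    exact π.commute_of_map_eq hcentral (hπb.trans her.symm) (by simp [hπa, heh]) hcomm'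
  obtain ⟨u, hu, hu2, hum⟩ := π.ker.exists_sq_mul_mul_conj_eq_one hcentral ha hz heven
  have hAu : (a * u) ^ m = 1 := by
    rw [(Subgroup.commute_of_mem_center (hcentral hu) a).mul_pow, ha, hum, one_mul]
  exact DihedralGroup.exists_comp_eq_id_of_lifts π hAu hb
    (conj_mul_eq_inv_of_sq_mul_mul_conj_eq_one (hcentral hu) hu2)
    (by simp [MonoidHom.mem_ker.mp hu, hπa]) hπb

theorem central_extension_splits_of_commuting_lifts_dihedral
    (m : ℕ) (hm : 1 ≤ m) (E : Type*) [Group E]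
    (π : E →* DihedralGroup m) (hsurj : Function.Surjective π)
    (hcentral : π.ker ≤ Subgroup.center E)
    (hker : Nonempty (π.ker ≃* Multiplicative (ℚ ⧸ AddSubgroup.zmultiples (1 : ℚ))))
    (r₀ : ZMod m)
    (hcomm : ∀ r h : DihedralGroup m, (∃ i : ZMod m, r = DihedralGroup.sr i) →
      IsConj (DihedralGroup.sr r₀) r → r * h = h * r →
      ∃ er eh : E, π er = r ∧ π eh = h ∧ er * eh = eh * er) :
    ∃ s : DihedralGroup m →* E, π.comp s = MonoidHom.id (DihedralGroup m) :=
  central_extension_splits_of_commuting_lifts_dihedral_general m E π hsurj hcentral hker r₀ hcomm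
end

section
/- Let n ≥ 3 be an odd integer and d a squarefree divisor of n with d ≡ 3 (mod 4). The group (ℤ/nℤ)ˣ acts on ℤ/nℤ by r • x = χ_d(r)·r·x, where χ_d(r) = (r|d) is the Jacobi symbol viewed as the unit ±1 in ℤ/nℤ. Then the number of orbits of this action on the set of nonzero elements of ℤ/nℤ equals τ(n) + τ(n/d) − 1, where τ denotes the number-of-divisors function. -/
/-!
For `d ≡ 3 (mod 4)` we have `(-1 | d) = -1`, so `(r | d) r` runs exactly over the kernel `K` of
`χ = (· | d)` on `(ZMod n)ˣ`, and the orbits of the twisted action are the `K`-orbits.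
Every `x` is `w e` with `w` a unit and `e ∣ n` determined by `x`, and `w e = w' e` exactly when
`w ≡ w' (mod n / e)`. If `d ∣ n / e`, then `χ` is constant on such classes, so `χ w` is an orbit
invariant. If `d ∤ n / e`, then, `d` being squarefree, some prime `p ∣ d` has `p ∤ n / e`, and the
Chinese remainder theorem gives a unit `t ≡ 1 (mod n / e)` with `χ t = -1`, which merges the two
sign classes. Hence every divisor `e ≠ n` of `n` carries one orbit, and a second one when
`e ∣ n / d`.
-/

open MulAction

theorem setOf_eq_intCast_mul_mul_eq_orbit_ker {R : Type*} [CommRing R] (χ : Rˣ →* ℤ)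
    (hχ : ∀ r, χ r = 1 ∨ χ r = -1) (hneg : χ (-1) = -1) (x : R) :
    {y | ∃ r : Rˣ, y = (χ r : R) * r * x} = orbit χ.ker x := by
  ext y
  simp only [Set.mem_ofPred_eq, mem_orbit_iff, Subtype.exists, MonoidHom.mem_ker,
    Subgroup.mk_smul, Units.smul_def, smul_eq_mul]
  constructor
  · rintro ⟨r, rfl⟩
    rcases hχ r with h | h
    · exact ⟨r, h, by simp [h]⟩
    · exact ⟨-r, by rw [← neg_one_mul, map_mul, hneg, h]; rfl, by simp [h]⟩
  · rintro ⟨u, hu, rfl⟩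
    exact ⟨u, by simp [hu]⟩

theorem Nat.card_subtype_exists_eq_card {α β ι : Type*} {p : α → Prop} {f : α → β} (g : ι → α)
    (hp : ∀ i, p (g i)) (hinj : Function.Injective (f ∘ g))
    (hsurj : ∀ x, p x → ∃ i, f x = f (g i)) :
    Nat.card {b // ∃ x, p x ∧ b = f x} = Nat.card ι := by
  refine (Nat.card_congr (Equiv.ofBijective (fun i ↦ ⟨f (g i), g i, hp i, rfl⟩) ⟨?_, ?_⟩)).symm
  · exact fun i j h ↦ hinj (congrArg Subtype.val h)
  · rintro ⟨_, x, hx, rfl⟩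
    obtain ⟨i, hi⟩ := hsurj x hx
    exact ⟨i, Subtype.ext hi.symm⟩

theorem Nat.mem_divisors_div_iff {n d e : ℕ} (hn : n ≠ 0) (hdn : d ∣ n) :
    e ∈ (n / d).divisors ↔ e ∣ n ∧ d ∣ n / e := by
  have hnd : n / d ≠ 0 :=
    (Nat.div_pos (Nat.le_of_dvd hn.bot_lt hdn) (Nat.pos_of_dvd_of_pos hdn hn.bot_lt)).ne'
  rw [Nat.mem_divisors, Nat.dvd_div_iff_mul_dvd hdn, and_iff_left hnd]
  refine ⟨fun h ↦ ⟨(dvd_mul_left e d).trans h, ?_⟩, fun ⟨he, h⟩ ↦ ?_⟩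
  · rwa [Nat.dvd_div_iff_mul_dvd ((dvd_mul_left e d).trans h), mul_comm]
  · rwa [Nat.dvd_div_iff_mul_dvd he, mul_comm] at h

theorem Nat.exists_prime_dvd_not_dvd_of_squarefree {d m : ℕ} (hsf : Squarefree d) (hm : m ≠ 0)
    (hdm : ¬ d ∣ m) : ∃ p, p.Prime ∧ p ∣ d ∧ ¬ p ∣ m := by
  rw [← Nat.prod_primeFactors_of_squarefree hsf, Nat.prod_primeFactors_dvd_iff hm,
    Finset.not_subset] at hdm
  obtain ⟨p, hpd, hpm⟩ := hdm
  have hp := Nat.prime_of_mem_primeFactors hpd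
  exact ⟨p, hp, Nat.dvd_of_mem_primeFactors hpd, fun h ↦ hpm (Nat.mem_primeFactors.2 ⟨hp, h, hm⟩)⟩

theorem Nat.ModEq.jacobiSym_eq {a b k : ℕ} (h : a ≡ b [MOD k]) :
    jacobiSym a k = jacobiSym b k :=
  jacobiSym.mod_left' (Int.natCast_modEq_iff.2 h)

theorem jacobiSym.exists_eq_neg_one {p : ℕ} [Fact p.Prime] (hp2 : p ≠ 2) :
    ∃ c : ℕ, jacobiSym c p = -1 := by
  obtain ⟨a, ha⟩ := FiniteField.exists_nonsquare (F := ZMod p) (by rwa [ZMod.ringChar_zmod_n])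
  exact ⟨a.val, by rwa [ZMod.nonsquare_iff_jacobiSym_eq_neg_one, Int.cast_natCast,
    ZMod.natCast_zmod_val]⟩

theorem jacobiSym.exists_coprime_modEq_one_eq_neg_one {n d m : ℕ} (hn : n ≠ 0) (hdn : d ∣ n)
    (hsf : Squarefree d) (hd : Odd d) (hmn : m ∣ n) (hdm : ¬ d ∣ m) :
    ∃ t : ℕ, t.Coprime n ∧ t ≡ 1 [MOD m] ∧ jacobiSym t d = -1 := by
  obtain ⟨p, hp, hpd, hpm⟩ :=
    Nat.exists_prime_dvd_not_dvd_of_squarefree hsf (ne_zero_of_dvd_ne_zero hn hmn) hdm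
  have := Fact.mk hp
  have hdp : p * (d / p) = d := Nat.mul_div_cancel' hpd
  have : NeZero (d / p) := ⟨fun h ↦ hsf.ne_zero (by rw [← hdp, h, mul_zero])⟩
  have hpdp : ¬ p ∣ d / p := fun h ↦
    hp.one_lt.ne' (Nat.isUnit_iff.1 (hsf p (hdp ▸ mul_dvd_mul_left p h)))
  have hp2 : p ≠ 2 := by
    rintro rfl
    exact Nat.not_even_iff_odd.2 hd (even_iff_two_dvd.2 hpd)
  -- with `n = p ^ k * q`, `p ∤ q`, take `t ≡ c (mod p ^ k)` for a non-residue `c` mod `p` and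
  -- `t ≡ 1 (mod q)`; then `(t | d) = (c | p) * (1 | d / p)`
  set k := n.factorization p
  set q := n / p ^ k
  have hsplit : p ^ k * q = n := Nat.ordProj_mul_ordCompl_eq_self n p
  have hk : k ≠ 0 := (hp.factorization_pos_of_dvd hn (hpd.trans hdn)).ne'
  have hdvd_q {a : ℕ} (han : a ∣ n) (hpa : ¬ p ∣ a) : a ∣ q :=
    ((hp.coprime_iff_not_dvd.2 hpa).symm.pow_right k).dvd_of_dvd_mul_left (hsplit ▸ han)
  obtain ⟨c, hc⟩ := jacobiSym.exists_eq_neg_one hp2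
  obtain ⟨t, htc, ht1⟩ := Nat.chineseRemainder ((Nat.coprime_ordCompl hp hn).pow_left k) c 1
  have htp : jacobiSym t p = -1 := by
    rw [(htc.of_dvd (dvd_pow_self p hk)).jacobiSym_eq, hc]
  have htdp : jacobiSym t (d / p) = 1 := by
    rw [(ht1.of_dvd (hdvd_q ((Nat.div_dvd_of_dvd hpd).trans hdn) hpdp)).jacobiSym_eq,
      Nat.cast_one, jacobiSym.one_left]
  refine ⟨t, ?_, ht1.of_dvd (hdvd_q hmn hpm), ?_⟩
  · have htp' : t.Coprime p := by
      have := jacobiSym.eq_zero_iff_not_coprime.not.1 (by rw [htp]; decide)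
      rwa [not_not, Int.gcd_natCast_natCast] at this
    rw [← hsplit]
    exact (htp'.pow_right k).mul_right (by rw [Nat.Coprime, ht1.gcd_eq, Nat.gcd_one_left])
  · rw [← hdp, jacobiSym.mul_right, htp, htdp, mul_one]

namespace ZMod

variable {n d : ℕ}

def jacobiChar (d : ℕ) : (ZMod d)ˣ →* ℤ where
  toFun u := jacobiSym ((u : ZMod d).val : ℤ) d
  map_one' := by
    rcases eq_or_ne d 1 with rfl | hd
    · exact jacobiSym.one_right _
    · rw [Units.val_one, val_one'' hd, Nat.cast_one, jacobiSym.one_left]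
  map_mul' u v := by
    rw [Units.val_mul, val_mul, Int.natCast_mod, ← jacobiSym.mod_left, Nat.cast_mul,
      jacobiSym.mul_left]

def unitsJacobiChar (hdn : d ∣ n) : (ZMod n)ˣ →* ℤ :=
  (jacobiChar d).comp (unitsMap hdn)

theorem jacobiChar_eq_one_or_neg_one (u : (ZMod d)ˣ) :
    jacobiChar d u = 1 ∨ jacobiChar d u = -1 :=
  jacobiSym.eq_one_or_neg_one (by simpa [Int.gcd_natCast_natCast] using val_coe_unit_coprime u)

theorem unitsJacobiChar_eq_one_or_neg_one (hdn : d ∣ n) (r : (ZMod n)ˣ) :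
    unitsJacobiChar hdn r = 1 ∨ unitsJacobiChar hdn r = -1 :=
  jacobiChar_eq_one_or_neg_one _

theorem jacobiChar_eq_of_coe_eq_intCast [NeZero d] {u : (ZMod d)ˣ} {a : ℤ}
    (h : (u : ZMod d) = a) : jacobiChar d u = jacobiSym a d := by
  refine jacobiSym.mod_left' ((intCast_eq_intCast_iff' _ _ _).1 ?_)
  rw [Int.cast_natCast, natCast_zmod_val, h]

theorem unitsJacobiChar_apply [NeZero n] (hdn : d ∣ n) (r : (ZMod n)ˣ) :
    unitsJacobiChar hdn r = jacobiSym ((r : ZMod n).val : ℤ) d := by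
  have : NeZero d := ⟨ne_zero_of_dvd_ne_zero (NeZero.ne n) hdn⟩
  exact jacobiChar_eq_of_coe_eq_intCast (by rw [unitsMap_val, cast_eq_val, Int.cast_natCast])

theorem unitsJacobiChar_neg_one (hdn : d ∣ n) (hd : d % 4 = 3) :
    unitsJacobiChar hdn (-1) = -1 := by
  have : NeZero d := ⟨by omega⟩
  rw [unitsJacobiChar, MonoidHom.comp_apply, unitsMap_def, Units.map_neg, map_one,
    jacobiChar_eq_of_coe_eq_intCast (a := -1) (by simp),
    jacobiSym.at_neg_one (Nat.odd_iff.2 (by omega)), χ₄_nat_three_mod_four hd]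

theorem coe_unit_mul_natCast_eq_zero_iff {e : ℕ} (he : e ∣ n) (w : (ZMod n)ˣ) :
    (w : ZMod n) * e = 0 ↔ e = n := by
  rw [Units.mul_right_eq_zero, natCast_eq_zero_iff]
  exact ⟨Nat.dvd_antisymm he, fun h ↦ h ▸ dvd_rfl⟩

section

variable [NeZero n]

theorem natCast_dvd_natCast_iff_of_dvd {e e' : ℕ} (he' : e' ∣ n) :
    (e' : ZMod n) ∣ (e : ZMod n) ↔ e' ∣ e := by
  refine ⟨fun ⟨c, hc⟩ ↦ ?_, Nat.cast_dvd_cast⟩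
  rw [← natCast_zmod_val c, ← Nat.cast_mul, natCast_eq_natCast_iff] at hc
  exact (hc.dvd_iff he').2 (dvd_mul_right _ _)

theorem natCast_associated_natCast_iff {e e' : ℕ} (he : e ∣ n) (he' : e' ∣ n) :
    Associated (e : ZMod n) (e' : ZMod n) ↔ e = e' := by
  refine ⟨fun h ↦ Nat.dvd_antisymm ?_ ?_, fun h ↦ h ▸ Associated.refl _⟩
  · exact (natCast_dvd_natCast_iff_of_dvd he).1 h.dvd
  · exact (natCast_dvd_natCast_iff_of_dvd he').1 h.symm.dvd

theorem mul_natCast_eq_mul_natCast_iff {e : ℕ} (he : e ∣ n) (a b : ZMod n) :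
    a * e = b * e ↔
      castHom (Nat.div_dvd_of_dvd he) (ZMod (n / e)) a =
        castHom (Nat.div_dvd_of_dvd he) (ZMod (n / e)) b := by
  have he0 : e ≠ 0 := ne_zero_of_dvd_ne_zero (NeZero.ne n) he
  rw [castHom_apply, castHom_apply, cast_eq_val, cast_eq_val, natCast_eq_natCast_iff,
    ← Nat.ModEq.mul_left_cancel_iff' he0, Nat.mul_div_cancel' he, ← natCast_eq_natCast_iff,
    Nat.cast_mul, Nat.cast_mul, natCast_zmod_val, natCast_zmod_val, mul_comm a, mul_comm b]

theorem exists_unitsMap_eq_one_and_unitsJacobiChar_eq_neg_one (hdn : d ∣ n)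
    (hsf : Squarefree d) (hd : Odd d) {m : ℕ} (hmn : m ∣ n) (hdm : ¬ d ∣ m) :
    ∃ t : (ZMod n)ˣ, unitsMap hmn t = 1 ∧ unitsJacobiChar hdn t = -1 := by
  obtain ⟨t, htn, ht1, htd⟩ :=
    jacobiSym.exists_coprime_modEq_one_eq_neg_one (NeZero.ne n) hdn hsf hd hmn hdm
  refine ⟨unitOfCoprime t htn, Units.ext ?_, ?_⟩
  · rw [unitsMap_val, coe_unitOfCoprime, cast_natCast hmn, Units.val_one, ← Nat.cast_one,
      natCast_eq_natCast_iff]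
    exact ht1
  · rw [unitsJacobiChar_apply, coe_unitOfCoprime, val_natCast,
      ((Nat.mod_modEq t n).of_dvd hdn).jacobiSym_eq, htd]

variable (hdn : d ∣ n) (hsf : Squarefree d) (hd : Odd d)
include hsf hd

theorem coe_unit_mul_natCast_mem_orbit_ker_iff {e : ℕ} (he : e ∣ n) (w w' : (ZMod n)ˣ) :
    (w' : ZMod n) * e ∈ orbit (unitsJacobiChar hdn).ker ((w : ZMod n) * e) ↔
      (d ∣ n / e → unitsJacobiChar hdn w' = unitsJacobiChar hdn w) := by
  set χ := unitsJacobiChar hdn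
  have hen : n / e ∣ n := Nat.div_dvd_of_dvd he
  have hmod (a b : (ZMod n)ˣ) : (a : ZMod n) * e = b * e ↔ unitsMap hen a = unitsMap hen b := by
    rw [mul_natCast_eq_mul_natCast_iff he, Units.ext_iff, unitsMap_val, unitsMap_val]
    rfl
  simp only [mem_orbit_iff, Subtype.exists, MonoidHom.mem_ker, Subgroup.mk_smul, Units.smul_def,
    smul_eq_mul, ← mul_assoc, ← Units.val_mul, hmod]
  constructor
  · rintro ⟨u, hu, h⟩ hde
    have hfactor : χ (u * w) = χ w' := by
      simp only [χ, unitsJacobiChar, MonoidHom.comp_apply, ← unitsMap_comp hde hen, h]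
    rw [← hfactor, map_mul, hu, one_mul]
  · intro h
    have hquot : χ (w' * w⁻¹) * χ w = χ w' := by rw [← map_mul, inv_mul_cancel_right]
    obtain h1 | h1 := unitsJacobiChar_eq_one_or_neg_one hdn (w' * w⁻¹)
    · exact ⟨w' * w⁻¹, h1, by rw [inv_mul_cancel_right]⟩
    have hde : ¬ d ∣ n / e := fun hde ↦ by
      rw [h1, h hde] at hquot
      rcases unitsJacobiChar_eq_one_or_neg_one hdn w with h2 | h2 <;> linarith
    obtain ⟨t, ht1, ht⟩ :=
      exists_unitsMap_eq_one_and_unitsJacobiChar_eq_neg_one hdn hsf hd hen hde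
    refine ⟨w' * w⁻¹ * t, ?_, ?_⟩
    · rw [map_mul, h1, ht, neg_mul_neg, one_mul]
    · rw [mul_right_comm, inv_mul_cancel_right, map_mul, ht1, mul_one]

theorem orbit_ker_coe_unit_mul_natCast_eq_iff {e e' : ℕ} (he : e ∣ n) (he' : e' ∣ n)
    (w w' : (ZMod n)ˣ) :
    orbit (unitsJacobiChar hdn).ker ((w' : ZMod n) * e') =
        orbit (unitsJacobiChar hdn).ker ((w : ZMod n) * e) ↔
      e' = e ∧ (d ∣ n / e → unitsJacobiChar hdn w' = unitsJacobiChar hdn w) := by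
  rw [orbit_eq_iff]
  refine ⟨fun h ↦ ?_, fun ⟨hee, h⟩ ↦
    hee ▸ (coe_unit_mul_natCast_mem_orbit_ker_iff hdn hsf hd he w w').2 h⟩
  obtain rfl : e' = e := by
    obtain ⟨u, hu⟩ := mem_orbit_iff.1 h
    rw [Subgroup.smul_def, Units.smul_def, smul_eq_mul] at hu
    have hassoc : Associated ((w : ZMod n) * e) ((w' : ZMod n) * e') := ⟨u, by rw [mul_comm, hu]⟩
    refine (natCast_associated_natCast_iff he' he).1 ?_
    exact (associated_unit_mul_left _ _ w'.isUnit).symm.trans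
      (hassoc.symm.trans (associated_unit_mul_left _ _ w.isUnit))
  exact ⟨rfl, (coe_unit_mul_natCast_mem_orbit_ker_iff hdn hsf hd he w w').1 h⟩

theorem card_nonzero_orbits_ker_unitsJacobiChar (hd1 : d ≠ 1) :
    Nat.card {S : Set (ZMod n) // ∃ x : ZMod n, x ≠ 0 ∧ S = orbit (unitsJacobiChar hdn).ker x} =
      n.divisors.card + (n / d).divisors.card - 1 := by
  set χ := unitsJacobiChar hdn
  have hn := NeZero.ne n
  obtain ⟨w₀, -, hw₀⟩ := exists_unitsMap_eq_one_and_unitsJacobiChar_eq_neg_one hdn hsf hd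
    (one_dvd n) (by rwa [Nat.dvd_one])
  let ι := {e // e ∈ n.divisors.erase n} ⊕ {e // e ∈ (n / d).divisors}
  let div : ι → ℕ := Sum.elim Subtype.val Subtype.val
  let unit : ι → (ZMod n)ˣ := Sum.elim (fun _ ↦ 1) (fun _ ↦ w₀)
  have hdiv (i : ι) : div i ∣ n ∧ div i ≠ n := by
    rcases i with ⟨e, he⟩ | ⟨e, he⟩
    · exact ⟨Nat.dvd_of_mem_divisors (Finset.mem_of_mem_erase he), Finset.ne_of_mem_erase he⟩
    · obtain ⟨hen, hde⟩ := (Nat.mem_divisors_div_iff hn hdn).1 he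
      refine ⟨hen, fun h ↦ hd1 (Nat.dvd_one.1 ?_)⟩
      rwa [show e = n from h, Nat.div_self hn.bot_lt] at hde
  rw [Nat.card_subtype_exists_eq_card (fun i ↦ (unit i : ZMod n) * div i), Nat.card_sum,
    Nat.card_eq_finsetCard, Nat.card_eq_finsetCard,
    Finset.card_erase_of_mem (Nat.mem_divisors_self n hn)]
  · have := Finset.card_pos.2 ⟨n, Nat.mem_divisors_self n hn⟩
    omega
  · exact fun i ↦ mt (coe_unit_mul_natCast_eq_zero_iff (hdiv i).1 _).1 (hdiv i).2
  · intro i j h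
    obtain ⟨hij, hχ⟩ :=
      (orbit_ker_coe_unit_mul_natCast_eq_iff hdn hsf hd (hdiv j).1 (hdiv i).1 _ _).1 h
    rcases i with ⟨a, ha⟩ | ⟨a, ha⟩ <;> rcases j with ⟨b, hb⟩ | ⟨b, hb⟩ <;>
      simp only [div, Sum.elim_inl, Sum.elim_inr] at hij <;> subst hij
    · rfl
    · exact absurd (hχ ((Nat.mem_divisors_div_iff hn hdn).1 hb).2) (by simp [unit, hw₀])
    · exact absurd (hχ ((Nat.mem_divisors_div_iff hn hdn).1 ha).2) (by simp [unit, hw₀])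
    · rfl
  · intro x hx
    obtain ⟨e, he, _, ⟨w, rfl⟩, rfl⟩ := eq_unit_mul_divisor x
    have hen : e ≠ n := mt (coe_unit_mul_natCast_eq_zero_iff he w).2 hx
    by_cases h : d ∣ n / e ∧ χ w = -1
    · refine ⟨Sum.inr ⟨e, (Nat.mem_divisors_div_iff hn hdn).2 ⟨he, h.1⟩⟩,
        (orbit_ker_coe_unit_mul_natCast_eq_iff hdn hsf hd he he _ _).2 ⟨rfl, fun _ ↦ ?_⟩⟩
      exact h.2.trans hw₀.symm
    · refine ⟨Sum.inl ⟨e, Finset.mem_erase.2 ⟨hen, Nat.mem_divisors.2 ⟨he, hn⟩⟩⟩,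
        (orbit_ker_coe_unit_mul_natCast_eq_iff hdn hsf hd he he _ _).2 ⟨rfl, fun hde ↦ ?_⟩⟩
      exact ((unitsJacobiChar_eq_one_or_neg_one hdn w).resolve_right fun h' ↦ h ⟨hde, h'⟩).trans
        (map_one χ).symm

end

end ZMod

open ZMod in
theorem orbit_count_twisted_action_general
    (n d : ℕ) (hodd : Odd n) (hdn : d ∣ n)
    (hsf : Squarefree d) (hd4 : d % 4 = 3) :
    Nat.card {S : Set (ZMod n) // ∃ x : ZMod n, x ≠ 0 ∧
      S = {y : ZMod n | ∃ r : (ZMod n)ˣ,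
        y = ((jacobiSym ((r : ZMod n).val : ℤ) d : ℤ) : ZMod n) * (r : ZMod n) * x}} =
      n.divisors.card + (n / d).divisors.card - 1 := by
  have : NeZero n := ⟨hodd.pos.ne'⟩
  simp_rw [← unitsJacobiChar_apply hdn,
    setOf_eq_intCast_mul_mul_eq_orbit_ker _ (unitsJacobiChar_eq_one_or_neg_one hdn)
      (unitsJacobiChar_neg_one hdn hd4)]
  exact card_nonzero_orbits_ker_unitsJacobiChar hdn hsf (Nat.odd_iff.2 (by omega)) (by omega)

theorem orbit_count_twisted_action
    (n d : ℕ) (hn : 3 ≤ n) (hodd : Odd n) (hdn : d ∣ n)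
    (hsf : Squarefree d) (hd4 : d % 4 = 3) :
    Nat.card {S : Set (ZMod n) // ∃ x : ZMod n, x ≠ 0 ∧
      S = {y : ZMod n | ∃ r : (ZMod n)ˣ,
        y = ((jacobiSym ((r : ZMod n).val : ℤ) d : ℤ) : ZMod n) * (r : ZMod n) * x}} =
      n.divisors.card + (n / d).divisors.card - 1 :=
  orbit_count_twisted_action_general n d hodd hdn hsf hd4
end
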